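/- In the inductive step of the directed Vertex Geography reduction (P-position case): let G be a directed graph with at least 2 vertices in which (G,v) is a normal-play P-position, and let G' be G with a fresh out-neighbour added to every vertex. Then (G',v₁) is a misère P-position: every move to some u₁ leads to a misère N-position (by induction, since the corresponding (G̃,u) is a normal N-position), and the move to v₂ is losing because it ends the game with the opponent unable to move (the opponent wins under misère convention). -/

import Mathlib

universe u
mutual
  inductive GNormalWin {α : Type u} (moves : α → α → Prop) : α → Prop
    | step {p q : α} : moves p q → GNormalLose moves q → GNormalWin moves p
  inductive GNormalLose {α : Type u} (moves : α → α → Prop) : α → Prop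
    | intro {p : α} : (∀ q, moves p q → GNormalWin moves q) → GNormalLose moves p
end

mutual
  inductive GMisereWin {α : Type u} (moves : α → α → Prop) : α → Prop
    | terminal {p : α} : (∀ q, ¬ moves p q) → GMisereWin moves p
    | step {p q : α} : moves p q → GMisereLose moves q → GMisereWin moves p
  inductive GMisereLose {α : Type u} (moves : α → α → Prop) : α → Prop
    | intro {p q₀ : α} : moves p q₀ → (∀ q, moves p q → GMisereWin moves q) → GMisereLose moves p
end

def nimMove {V : Type u} (adj : V → V → Prop) (p q : V × (V → ℕ)) : Prop :=
  adj p.1 q.1 ∧ q.2 p.1 < p.2 p.1 ∧ ∀ v, v ≠ p.1 → q.2 v = p.2 v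

mutual
  inductive NimRMWin {V : Type u} (adj : V → V → Prop) : V × (V → ℕ) → Prop
    | zero {p} : p.2 p.1 = 0 → NimRMWin adj p
    | step {p q} : nimMove adj p q → NimRMLose adj q → NimRMWin adj p
  inductive NimRMLose {V : Type u} (adj : V → V → Prop) : V × (V → ℕ) → Prop
    | intro {p} : p.2 p.1 ≠ 0 → (∀ q, nimMove adj p q → NimRMWin adj q) → NimRMLose adj p
end

def vgMove {V : Type u} (A : V → V → Prop) (p q : Set V × V) : Prop :=
  A p.2 q.2 ∧ q.2 ∈ p.1 ∧ q.2 ≠ p.2 ∧ q.1 = p.1 \ {p.2}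

def addOut {V : Type u} (A : V → V → Prop) : V ⊕ V → V ⊕ V → Prop
  | .inl a, .inl b => A a b
  | .inl a, .inr b => a = b
  | _, _ => False

def MaxMatching {V : Type u} (G : SimpleGraph V) (M : G.Subgraph) : Prop :=
  M.IsMatching ∧ ∀ N : G.Subgraph, N.IsMatching → N.edgeSet.ncard ≤ M.edgeSet.ncard

/-! A position `(S, u)` of Vertex Geography on `G` corresponds to the position of `G'` in which
the copies of `S` and all the pendant sinks are still available. Moves of `G` lift to moves of
`G'` and, from a lifted position, the only other move is to the pendant sink `u₂`, after which the
opponent is stuck and so wins under misère play. Hence, by simultaneous induction, normal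
`N`-positions lift to misère `N`-positions and normal `P`-positions to misère `P`-positions. -/

section VertexGeography

variable {V : Type u}

def liftPos (p : Set V × V) : Set (V ⊕ V) × (V ⊕ V) :=
  (Sum.inl '' p.1 ∪ Set.range Sum.inr, Sum.inl p.2)

lemma liftPos_univ (v : V) : liftPos (Set.univ, v) = (Set.univ, Sum.inl v) := by
  simp [liftPos]

lemma liftPos_fst_diff (S : Set V) (u : V) :
    (liftPos (S, u)).1 \ {Sum.inl u} = (liftPos (S \ {u}, u)).1 := by
  ext (x | x) <;> simp [liftPos]

variable (A : V → V → Prop)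

lemma not_vgMove_addOut_inr (T : Set (V ⊕ V)) (w : V) (q : Set (V ⊕ V) × (V ⊕ V)) :
    ¬ vgMove (addOut A) (T, Sum.inr w) q := by
  obtain ⟨T', x | x⟩ := q <;> exact fun h => h.1

lemma vgMove_liftPos {p q : Set V × V} (h : vgMove A p q) :
    vgMove (addOut A) (liftPos p) (liftPos q) := by
  obtain ⟨S, u⟩ := p
  obtain ⟨S', w⟩ := q
  obtain ⟨hA, hw, hne, rfl⟩ := h
  exact ⟨hA, Or.inl ⟨w, hw, rfl⟩, by simpa [liftPos] using hne, (liftPos_fst_diff S u).symm⟩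

lemma vgMove_liftPos_pendant (p : Set V × V) :
    vgMove (addOut A) (liftPos p) ((liftPos p).1 \ {Sum.inl p.2}, Sum.inr p.2) :=
  ⟨rfl, Or.inr ⟨p.2, rfl⟩, Sum.inr_ne_inl, rfl⟩

lemma exists_vgMove_of_vgMove_liftPos {p : Set V × V} {T : Set (V ⊕ V)} {w : V}
    (h : vgMove (addOut A) (liftPos p) (T, Sum.inl w)) :
    ∃ q, vgMove A p q ∧ liftPos q = (T, Sum.inl w) := by
  obtain ⟨S, u⟩ := p
  obtain ⟨hA, hw, hne, rfl⟩ := h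
  refine ⟨(S \ {u}, w), ⟨hA, ?_, by simpa [liftPos] using hne, rfl⟩, ?_⟩
  · simpa [liftPos] using hw
  · exact congrArg (·, Sum.inl w) (liftPos_fst_diff S u).symm

mutual

theorem GNormalWin.misereWin_liftPos {p : Set V × V} :
    GNormalWin (vgMove A) p → GMisereWin (vgMove (addOut A)) (liftPos p)
  | .step hpq hq => .step (vgMove_liftPos A hpq) hq.misereLose_liftPos

theorem GNormalLose.misereLose_liftPos {p : Set V × V} :
    GNormalLose (vgMove A) p → GMisereLose (vgMove (addOut A)) (liftPos p)
  | .intro hwin => by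
    refine .intro (vgMove_liftPos_pendant A p) fun ⟨T, x⟩ hmove => ?_
    cases x with
    | inr w => exact .terminal (not_vgMove_addOut_inr A T w)
    | inl w =>
      obtain ⟨q, hpq, hq⟩ := exists_vgMove_of_vgMove_liftPos A hmove
      exact hq ▸ (hwin q hpq).misereWin_liftPos

end

end VertexGeography

/-- Inductive step of the directed Vertex Geography reduction (`P`-position case): if
`(G,v)` is a normal-play `P`-position then `(G',v₁)` is a misère `P`-position, where `G'`
adds a fresh out-neighbour to each vertex. -/
theorem stmt13 {V : Type} [Fintype V] (hcard : 2 ≤ Fintype.card V) (A : V → V → Prop)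
    (v : V) (hP : GNormalLose (vgMove A) (Set.univ, v)) :
    GMisereLose (vgMove (addOut A)) (Set.univ, Sum.inl v) :=
  liftPos_univ v ▸ hP.misereLose_liftPos A
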